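/- arXiv:2507.10956 — 2 statements merged into one kernel-verified Lean document; each statement's English description precedes it below -/
import Mathlib

section
/- Let W^t, W^{t+1} ∈ R^{d×c} have all rows nonzero, let D^t be diagonal with D^t_{ii} = 1/(2||w_i^t||_2). If ||X W^{t+1} - F||_F^2 + β Tr((W^{t+1})' D^t W^{t+1}) ≤ ||X W^t - F||_F^2 + β Tr((W^t)' D^t W^t) with β > 0, then ||X W^{t+1} - F||_F^2 + β ||W^{t+1}||_{2,1} ≤ ||X W^t - F||_F^2 + β ||W^t||_{2,1}. -/
/-!
The reweighted penalty `Tr(Wᵀ D W) = ∑ᵢ ‖wᵢ‖² / (2‖wᵢᵗ‖)` is a row-wise majorizer of the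
`ℓ_{2,1}` norm up to a constant: by AM–GM, `x - x² / (2s) ≤ s / 2` for every real `x` and `s > 0`,
with equality at `x = s`. Hence `‖W‖_{2,1} - Tr(Wᵀ D W)` is maximized at `W = Wᵗ`, and adding
`β` times this to the assumed decrease gives the decrease of the `ℓ_{2,1}`-regularized objective.
-/

open Matrix

theorem Matrix.trace_transpose_mul_diagonal_mul {m k R : Type*} [Fintype m] [Fintype k]
    [DecidableEq m] [CommSemiring R] (g : m → R) (W : Matrix m k R) :
    trace (Wᵀ * diagonal g * W) = ∑ i, g i * ∑ j, W i j ^ 2 := by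
  simp only [trace, diag, mul_apply, transpose_apply, diagonal_apply, mul_ite, mul_zero,
    Finset.sum_ite_eq', Finset.mem_univ, if_true, Finset.mul_sum]
  rw [Finset.sum_comm]
  exact Finset.sum_congr rfl fun i _ => Finset.sum_congr rfl fun j _ => by ring

theorem Real.sqrt_sum_sq_pos {ι : Type*} [Fintype ι] {v : ι → ℝ} (hv : v ≠ 0) :
    0 < √(∑ j, v j ^ 2) := by
  obtain ⟨j, hj⟩ := Function.ne_iff.mp hv
  exact Real.sqrt_pos.2 <| lt_of_lt_of_le (pow_two_pos_of_ne_zero hj)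
    (Finset.single_le_sum (f := fun j => v j ^ 2) (fun j _ => sq_nonneg _) (Finset.mem_univ j))

theorem sub_sq_div_two_mul_le_half {s : ℝ} (hs : 0 < s) (x : ℝ) : x - x ^ 2 / (2 * s) ≤ s / 2 := by
  have h : s / 2 - (x - x ^ 2 / (2 * s)) = (x - s) ^ 2 / (2 * s) := by
    field_simp
    ring
  linarith [show 0 ≤ (x - s) ^ 2 / (2 * s) by positivity]

theorem sub_sq_div_two_mul_self {s : ℝ} (hs : 0 < s) : s - s ^ 2 / (2 * s) = s / 2 := by
  field_simp
  ring

theorem sum_sqrt_sub_reweighted_le {m k : Type*} [Fintype m] [Fintype k]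
    (V W : Matrix m k ℝ) (hV : ∀ i, V i ≠ 0) :
    ∑ i, √(∑ j, W i j ^ 2) - ∑ i, 1 / (2 * √(∑ j, V i j ^ 2)) * ∑ j, W i j ^ 2 ≤
      ∑ i, √(∑ j, V i j ^ 2) - ∑ i, 1 / (2 * √(∑ j, V i j ^ 2)) * ∑ j, V i j ^ 2 := by
  rw [← Finset.sum_sub_distrib, ← Finset.sum_sub_distrib]
  refine Finset.sum_le_sum fun i _ => ?_
  have hs := Real.sqrt_sum_sq_pos (hV i)
  have sq_sqrt_sum (U : Matrix m k ℝ) : √(∑ j, U i j ^ 2) ^ 2 = ∑ j, U i j ^ 2 :=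
    Real.sq_sqrt (by positivity)
  calc √(∑ j, W i j ^ 2) - 1 / (2 * √(∑ j, V i j ^ 2)) * ∑ j, W i j ^ 2
      = √(∑ j, W i j ^ 2) - √(∑ j, W i j ^ 2) ^ 2 / (2 * √(∑ j, V i j ^ 2)) := by
        rw [sq_sqrt_sum, one_div_mul_eq_div]
    _ ≤ √(∑ j, V i j ^ 2) / 2 := sub_sq_div_two_mul_le_half hs _
    _ = √(∑ j, V i j ^ 2) - √(∑ j, V i j ^ 2) ^ 2 / (2 * √(∑ j, V i j ^ 2)) :=
        (sub_sq_div_two_mul_self hs).symm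
    _ = √(∑ j, V i j ^ 2) - 1 / (2 * √(∑ j, V i j ^ 2)) * ∑ j, V i j ^ 2 := by
        rw [sq_sqrt_sum, one_div_mul_eq_div]

theorem l21_descent_general (n d c : ℕ)
    (X : Matrix (Fin n) (Fin d) ℝ) (F : Matrix (Fin n) (Fin c) ℝ)
    (β : ℝ) (hβ : 0 < β)
    (Wt Wt1 : Matrix (Fin d) (Fin c) ℝ)
    (hWt : ∀ i, Wt i ≠ 0)
    (Dt : Matrix (Fin d) (Fin d) ℝ)
    (hDt : Dt = Matrix.diagonal (fun i => 1 / (2 * Real.sqrt (∑ j, (Wt i j) ^ 2))))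
    (hdec : Matrix.trace ((X * Wt1 - F)ᵀ * (X * Wt1 - F)) +
        β * Matrix.trace (Wt1ᵀ * Dt * Wt1) ≤
      Matrix.trace ((X * Wt - F)ᵀ * (X * Wt - F)) +
        β * Matrix.trace (Wtᵀ * Dt * Wt)) :
    Matrix.trace ((X * Wt1 - F)ᵀ * (X * Wt1 - F)) +
        β * ∑ i, Real.sqrt (∑ j, (Wt1 i j) ^ 2) ≤
      Matrix.trace ((X * Wt - F)ᵀ * (X * Wt - F)) +
        β * ∑ i, Real.sqrt (∑ j, (Wt i j) ^ 2) := by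
  subst hDt
  rw [trace_transpose_mul_diagonal_mul, trace_transpose_mul_diagonal_mul] at hdec
  have hgap := mul_le_mul_of_nonneg_left (sum_sqrt_sub_reweighted_le Wt Wt1 hWt) hβ.le
  linarith

theorem l21_descent (n d c : ℕ)
    (X : Matrix (Fin n) (Fin d) ℝ) (F : Matrix (Fin n) (Fin c) ℝ)
    (β : ℝ) (hβ : 0 < β)
    (Wt Wt1 : Matrix (Fin d) (Fin c) ℝ)
    (hWt : ∀ i, Wt i ≠ 0) (hWt1 : ∀ i, Wt1 i ≠ 0)
    (Dt : Matrix (Fin d) (Fin d) ℝ)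
    (hDt : Dt = Matrix.diagonal (fun i => 1 / (2 * Real.sqrt (∑ j, (Wt i j) ^ 2))))
    (hdec : Matrix.trace ((X * Wt1 - F)ᵀ * (X * Wt1 - F)) +
        β * Matrix.trace (Wt1ᵀ * Dt * Wt1) ≤
      Matrix.trace ((X * Wt - F)ᵀ * (X * Wt - F)) +
        β * Matrix.trace (Wtᵀ * Dt * Wt)) :
    Matrix.trace ((X * Wt1 - F)ᵀ * (X * Wt1 - F)) +
        β * ∑ i, Real.sqrt (∑ j, (Wt1 i j) ^ 2) ≤
      Matrix.trace ((X * Wt - F)ᵀ * (X * Wt - F)) +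
        β * ∑ i, Real.sqrt (∑ j, (Wt i j) ^ 2) :=
  l21_descent_general n d c X F β hβ Wt Wt1 hWt Dt hDt hdec
end

section
/- For X ∈ R^{n×d} and a symmetric positive definite matrix B ∈ R^{d×d}, the eigenvalues of H = X B^{-1} X' lie in [0, ∞), and if B = X'X + βD with β > 0 and D positive definite diagonal, then all eigenvalues of H are in [0, 1); consequently Tr(F' (I_n - H) F) > 0 for every nonzero F ∈ R^{n×c}. -/
/-!
`X (XᵀX + βD)⁻¹ Xᵀ` is positive semidefinite as a congruence of a positive definite matrix, and
by the Woodbury identity `1 - X (XᵀX + βD)⁻¹ Xᵀ = (1 + X (βD)⁻¹ Xᵀ)⁻¹` is the inverse of a positive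
definite matrix, hence itself positive definite. Positive definiteness of `1 - H` gives both the
eigenvalue bound `< 1` and the positivity of `Tr (Fᵀ (1 - H) F)`, whose diagonal entries are the
quadratic forms of `1 - H` at the columns of `F`.
-/

open Matrix

open scoped ComplexOrder

namespace Matrix

variable {m n c 𝕜 R : Type*} [Fintype m] [Fintype n] [Fintype c]

theorem PosDef.trace_conjTranspose_mul_mul_pos [Ring R] [PartialOrder R] [StarRing R]
    [IsOrderedCancelAddMonoid R] {M : Matrix n n R} (hM : M.PosDef) {F : Matrix n c R}
    (hF : F ≠ 0) : 0 < (Fᴴ * M * F).trace := by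
  have hdiag (j : c) : (Fᴴ * M * F) j j = star (Fᵀ j) ⬝ᵥ (M *ᵥ Fᵀ j) := by
    rw [Matrix.mul_assoc]
    simp [mul_apply, dotProduct, mulVec]
  obtain ⟨i, j, hij⟩ : ∃ i j, F i j ≠ 0 := by
    by_contra! h
    exact hF (Matrix.ext h)
  refine Finset.sum_pos' (fun k _ => ?_) ⟨j, Finset.mem_univ j, ?_⟩
  · rw [diag_apply, hdiag]
    exact hM.posSemidef.dotProduct_mulVec_nonneg _
  · rw [diag_apply, hdiag]
    exact hM.dotProduct_mulVec_pos fun h => hij (congrFun h i)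

variable [RCLike 𝕜] [DecidableEq n]

theorem IsHermitian.eigenvalues_lt_one {A : Matrix n n 𝕜} (hA : A.IsHermitian)
    (h : (1 - A).PosDef) (i : n) : hA.eigenvalues i < 1 := by
  have hmem : 1 - hA.eigenvalues i ∈ spectrum ℝ (1 - A) := by
    rw [← map_one (algebraMap ℝ (Matrix n n 𝕜)), ← spectrum.singleton_sub_eq]
    exact Set.sub_mem_sub rfl (hA.eigenvalues_mem_spectrum_real i)
  obtain ⟨j, hj⟩ := h.isHermitian.spectrum_real_eq_range_eigenvalues ▸ hmem
  linarith [h.eigenvalues_pos j]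

theorem PosDef.inv_one_add_mul_inv_mul_conjTranspose [DecidableEq m] {A : Matrix m m 𝕜}
    (hA : A.PosDef) (X : Matrix n m 𝕜) :
    (1 + X * A⁻¹ * Xᴴ)⁻¹ = 1 - X * (Xᴴ * X + A)⁻¹ * Xᴴ := by
  have hB : (Xᴴ * X + A).PosDef := hA.posSemidef_add (posSemidef_conjTranspose_mul_self X)
  have hAA : A⁻¹⁻¹ = A := nonsing_inv_nonsing_inv A ((isUnit_iff_isUnit_det A).mp hA.isUnit)
  have woodbury := add_mul_mul_inv_eq_sub 1 X A⁻¹ Xᴴ isUnit_one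
    (isUnit_nonsing_inv_iff.mpr hA.isUnit)
    (by rw [hAA, inv_one, Matrix.mul_one, add_comm]; exact hB.isUnit)
  simpa [hAA, add_comm A] using woodbury

theorem PosDef.one_sub_mul_inv_conjTranspose_mul_self_add_mul_conjTranspose [DecidableEq m]
    {A : Matrix m m 𝕜} (hA : A.PosDef) (X : Matrix n m 𝕜) :
    (1 - X * (Xᴴ * X + A)⁻¹ * Xᴴ).PosDef := by
  rw [← hA.inv_one_add_mul_inv_mul_conjTranspose]
  exact (PosDef.one.add_posSemidef (hA.inv.posSemidef.mul_mul_conjTranspose_same X)).inv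

end Matrix

theorem hat_matrix_eigenvalues (n d c : ℕ)
    (X : Matrix (Fin n) (Fin d) ℝ)
    (dg : Fin d → ℝ) (hdg : ∀ i, 0 < dg i)
    (D : Matrix (Fin d) (Fin d) ℝ) (hD : D = Matrix.diagonal dg)
    (β : ℝ) (hβ : 0 < β) :
    (∀ B : Matrix (Fin d) (Fin d) ℝ, B.PosDef → B.IsSymm →
      ∃ hH : (X * B⁻¹ * Xᵀ).IsHermitian, ∀ i, 0 ≤ hH.eigenvalues i) ∧
    (∃ hH : (X * (Xᵀ * X + β • D)⁻¹ * Xᵀ).IsHermitian,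
      (∀ i, 0 ≤ hH.eigenvalues i ∧ hH.eigenvalues i < 1) ∧
      ∀ F : Matrix (Fin n) (Fin c) ℝ, F ≠ 0 →
        0 < Matrix.trace (Fᵀ * (1 - X * (Xᵀ * X + β • D)⁻¹ * Xᵀ) * F)) := by
  have hXt : Xᴴ = Xᵀ := conjTranspose_eq_transpose_of_trivial X
  have hH_psd {B : Matrix (Fin d) (Fin d) ℝ} (hB : B.PosDef) : (X * B⁻¹ * Xᵀ).PosSemidef :=
    hXt ▸ hB.inv.posSemidef.mul_mul_conjTranspose_same X
  have hβD : (β • D).PosDef := by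
    rw [hD, ← diagonal_smul]
    exact PosDef.diagonal fun i => mul_pos hβ (hdg i)
  have hB : (Xᵀ * X + β • D).PosDef :=
    hXt ▸ hβD.posSemidef_add (posSemidef_conjTranspose_mul_self X)
  have hM : (1 - X * (Xᵀ * X + β • D)⁻¹ * Xᵀ).PosDef :=
    hXt ▸ hβD.one_sub_mul_inv_conjTranspose_mul_self_add_mul_conjTranspose X
  refine ⟨fun B hB _ => ⟨(hH_psd hB).isHermitian, (hH_psd hB).eigenvalues_nonneg⟩,
    (hH_psd hB).isHermitian,
    fun i => ⟨(hH_psd hB).eigenvalues_nonneg i, (hH_psd hB).isHermitian.eigenvalues_lt_one hM i⟩,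
    fun F hF => ?_⟩
  simpa [conjTranspose_eq_transpose_of_trivial] using hM.trace_conjTranspose_mul_mul_pos hF
end
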